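/- The element Δ = Π_n(s_1,...,s_n), characterized by having diagonal part diag(q,...,q) under the monomial representation, is a Garside element of the structure monoid: it is balanced (left and right divisor sets coincide), its set of divisors is finite of cardinality 2^n, and its divisors generate the monoid. -/

import Mathlib

/-- Dehornoy's `Ω` expression: `Omega op k t` is `Ω_{k+1}(t 0, …, t k)`,
defined by `Ω_1(x) = x` and
`Ω_k(x_1,…,x_k) = Ω_{k-1}(x_1,…,x_{k-1}) * Ω_{k-1}(x_1,…,x_{k-2},x_k)`. -/
def Omega {S : Type*} (op : S → S → S) : (k : ℕ) → (Fin (k + 1) → S) → S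
  | 0, t => t 0
  | k + 1, t =>
      op (Omega op k fun i => t i.castSucc)
        (Omega op k fun i =>
          if i = Fin.last k then t (Fin.last (k + 1)) else t i.castSucc)

/-- Dehornoy's `Π` expression: `PiExpr op ι k t = ι(Ω_1(t_1)) ⋯ ι(Ω_k(t_1,…,t_k))`. -/
def PiExpr {S M : Type*} [Monoid M] (op : S → S → S) (ι : S → M) :
    (k : ℕ) → (Fin k → S) → M
  | 0, _ => 1
  | k + 1, t => PiExpr op ι k (fun i => t i.castSucc) * ι (Omega op k t)

/-- The defining relations of the structure monoid: `s (s*t) = t (t*s)`. -/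
def csRel {S : Type*} (op : S → S → S) (a b : FreeMonoid S) : Prop :=
  ∃ s t : S, a = FreeMonoid.of s * FreeMonoid.of (op s t) ∧
    b = FreeMonoid.of t * FreeMonoid.of (op t s)

/-- The structure monoid `⟨S ∣ s(s*t) = t(t*s)⟩⁺` of a cycle set. -/
abbrev StructureMonoid {S : Type*} (op : S → S → S) := (conGen (csRel op)).Quotient

/-- The canonical generators of the structure monoid. -/
def mkM {S : Type*} (op : S → S → S) (s : S) : StructureMonoid op :=
  (conGen (csRel op)).mk' (FreeMonoid.of s)

/-- The permutation matrix of `σ`: row `i` has a `1` in column `σ i`. -/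
def Pmat {ι : Type*} [DecidableEq ι] (R : Type*) [Semiring R] (σ : Equiv.Perm ι) :
    Matrix ι ι R := Matrix.of fun i j => if j = σ i then 1 else 0

/-- The diagonal matrix `D_s = diag(1,…,q,…,1)` with `q` in position `s`. -/
noncomputable def Dmat {S : Type*} [DecidableEq S] (s : S) : Matrix S S (Polynomial ℚ) :=
  Matrix.diagonal fun t => if t = s then Polynomial.X else 1

/-- The permutation `ψ(s) : t ↦ s * t` attached to an element of a cycle set. -/
noncomputable def psi {S : Type*} (op : S → S → S) (hbij : ∀ s : S, Function.Bijective (op s))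
    (s : S) : Equiv.Perm S := Equiv.ofBijective (op s) (hbij s)

/-- The monomial matrix `Θ(s) = D_s P_{ψ(s)}` associated to a generator. -/
noncomputable def theta {S : Type*} [Fintype S] [DecidableEq S] (op : S → S → S)
    (hbij : ∀ s : S, Function.Bijective (op s)) (s : S) : Matrix S S (Polynomial ℚ) :=
  Dmat s * Pmat (Polynomial ℚ) (psi op hbij s)

/-!
`Θ` factors through the monoid of monomial matrices `diag(X^e) P_σ`, and the exponent map
`g ↦ e(g)` from the structure monoid to `ℕ^S` is a bijection. It is injective because a generator
`s` left-divides `g` as soon as `e(g)_s ≠ 0` (the relations `t (t*s) = s (s*t)` move `s` to the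
front), and surjective by induction on `∑ e`. Since `e(Δ) = (1,…,1)`, the left divisors of `Δ` are
exactly the `g` with `e(g) ≤ 1`: there are `2^n` of them and they include every generator. A
complement argument shows that the right divisors are the same elements.
-/

open Polynomial

/-- `⟨e, σ⟩` encodes the monomial matrix `diag(X^e) P_σ`; the multiplication is the matrix
product in this encoding (see `MonomialMat.toMatrix`). -/
@[ext]
structure MonomialMat (S : Type*) where
  exp : S → ℕ
  perm : Equiv.Perm S

namespace MonomialMat

variable {S : Type*}

instance : Monoid (MonomialMat S) where
  mul a b := ⟨a.exp + b.exp ∘ a.perm, a.perm.trans b.perm⟩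
  one := ⟨0, Equiv.refl S⟩
  mul_assoc a b c := by
    ext i
    · exact add_assoc _ _ _
    · rfl
  one_mul a := by
    ext i
    · exact zero_add _
    · rfl
  mul_one a := by
    ext i
    · exact add_zero _
    · rfl

@[simp] lemma mul_exp (a b : MonomialMat S) : (a * b).exp = a.exp + b.exp ∘ a.perm := rfl
@[simp] lemma mul_perm (a b : MonomialMat S) : (a * b).perm = a.perm.trans b.perm := rfl
@[simp] lemma one_exp : (1 : MonomialMat S).exp = 0 := rfl
@[simp] lemma one_perm : (1 : MonomialMat S).perm = Equiv.refl S := rfl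

lemma exp_le_mul_exp (a b : MonomialMat S) : a.exp ≤ (a * b).exp := le_self_add

lemma exp_comp_perm_le_mul_exp (a b : MonomialMat S) : b.exp ∘ a.perm ≤ (a * b).exp :=
  le_add_self

lemma exp_comp_perm_eq_of_mul_eq_mul {a b c : MonomialMat S} (h : a * b = b * c)
    (h1 : (a * b).exp = 1) : c.exp ∘ (a * b).perm = a.exp := by
  funext i
  have hab := congrFun h1 i
  have hbc := congrFun (h ▸ h1) (a.perm i)
  simp only [mul_exp, Pi.add_apply, Function.comp_apply, Pi.one_apply] at hab hbc ⊢
  simp only [mul_perm, Equiv.trans_apply]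
  omega

section Matrix

variable [Fintype S] [DecidableEq S] {R : Type*} [Semiring R]

lemma permMatrix_mul_diagonal (σ : Equiv.Perm S) (d : S → R) :
    σ.permMatrix R * Matrix.diagonal d = Matrix.diagonal (d ∘ σ) * σ.permMatrix R := by
  ext i j
  simp only [PEquiv.toMatrix_toPEquiv_mul, PEquiv.mul_toMatrix_toPEquiv, Matrix.submatrix_apply,
    Matrix.diagonal_apply, id, Equiv.eq_symm_apply, Function.comp_apply]

noncomputable def toMatrix : MonomialMat S →* Matrix S S R[X] where
  toFun m := Matrix.diagonal (fun i => X ^ m.exp i) * m.perm.permMatrix R[X]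
  map_one' := by simp
  map_mul' a b := by
    simp only [mul_exp, mul_perm, Pi.add_apply, Function.comp_apply, pow_add]
    rw [mul_assoc, ← mul_assoc (a.perm.permMatrix _), permMatrix_mul_diagonal, mul_assoc,
      ← Matrix.diagonal_mul_diagonal, ← Matrix.permMatrix_mul, ← mul_assoc]
    rfl

lemma toMatrix_apply (m : MonomialMat S) (i j : S) :
    toMatrix (R := R) m i j = if m.perm i = j then X ^ m.exp i else 0 := by
  simp [toMatrix, PEquiv.mul_toMatrix_toPEquiv, Matrix.diagonal_apply, Equiv.eq_symm_apply]

lemma toMatrix_injective [Nontrivial R] : Function.Injective (toMatrix (S := S) (R := R)) := by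
  intro m m' h
  have hentry (i : S) := congrFun (congrFun h i) (m.perm i)
  simp only [toMatrix_apply, if_true] at hentry
  have hperm (i : S) : m'.perm i = m.perm i := by
    by_contra hne
    exact (monic_X_pow _).ne_zero (by simpa [hne] using hentry i)
  have hexp (i : S) : m.exp i = m'.exp i := by
    simpa [hperm i] using congrArg natDegree (hentry i)
  exact MonomialMat.ext (funext hexp) (Equiv.ext fun i => (hperm i).symm)

end Matrix
end MonomialMat

lemma Pmat_eq_permMatrix {ι : Type*} [DecidableEq ι] (R : Type*) [Semiring R] (σ : Equiv.Perm ι) :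
    Pmat R σ = σ.permMatrix R := by
  ext i j
  simp [Pmat, eq_comm]

namespace StructureMonoid

variable {S : Type*} (op : S → S → S)

theorem induction_on {p : StructureMonoid op → Prop} (g : StructureMonoid op) (one : p 1)
    (mkM_mul : ∀ s g, p g → p (mkM op s * g)) : p g := by
  induction g using Con.induction_on with
  | H w =>
    induction w using FreeMonoid.inductionOn' with
    | one => exact one
    | of_mul s w ih => exact mkM_mul s w ih

theorem mkM_mul_mkM (s t : S) : mkM op s * mkM op (op s t) = mkM op t * mkM op (op t s) := by
  simp only [mkM, ← map_mul]
  exact (Con.eq _).2 (ConGen.Rel.of _ _ ⟨s, t, rfl, rfl⟩)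

theorem hom_ext {M : Type*} [Monoid M] {f g : StructureMonoid op →* M}
    (h : ∀ s, f (mkM op s) = g (mkM op s)) : f = g :=
  Con.hom_ext (FreeMonoid.hom_eq h)

theorem closure_range_mkM : Submonoid.closure (Set.range (mkM op)) = ⊤ :=
  eq_top_iff.2 fun g _ => induction_on op g (one_mem _)
    fun s _ hg => mul_mem (Submonoid.subset_closure ⟨s, rfl⟩) hg

variable [DecidableEq S] (hbij : ∀ s : S, Function.Bijective (op s))
  (hcs : ∀ s t u : S, op (op s t) (op s u) = op (op t s) (op t u))

noncomputable def monomialGen (s : S) : MonomialMat S := ⟨Pi.single s 1, psi op hbij s⟩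

include hcs in
theorem monomialGen_mul_monomialGen (s t : S) :
    monomialGen op hbij s * monomialGen op hbij (op s t) =
      monomialGen op hbij t * monomialGen op hbij (op t s) := by
  ext u
  · have hsingle (s t : S) :
        (Pi.single (op s t) 1 : S → ℕ) (op s u) = (Pi.single t 1 : S → ℕ) u := by
      simp only [Pi.single_apply, (hbij s).1.eq_iff]
    simp only [monomialGen, MonomialMat.mul_exp, Pi.add_apply, Function.comp_apply, psi,
      Equiv.ofBijective_apply, hsingle, add_comm]
  · exact hcs s t u

noncomputable def monomialRep : StructureMonoid op →* MonomialMat S :=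
  Con.lift _ (FreeMonoid.lift (monomialGen op hbij)) <| Con.conGen_le.2 <| by
    rintro _ _ ⟨s, t, rfl, rfl⟩
    simpa using monomialGen_mul_monomialGen op hbij hcs s t

local notation "ρ" => monomialRep op hbij hcs

lemma monomialRep_mkM (s : S) : ρ (mkM op s) = monomialGen op hbij s := rfl

lemma exp_monomialRep_mkM_mul (s : S) (g : StructureMonoid op) :
    (ρ (mkM op s * g)).exp = Pi.single s 1 + (ρ g).exp ∘ op s := by
  rw [map_mul, monomialRep_mkM]
  rfl

theorem exists_eq_mkM_mul_of_exp_ne_zero (g : StructureMonoid op) {s : S}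
    (hs : (ρ g).exp s ≠ 0) : ∃ h, g = mkM op s * h := by
  induction g using induction_on generalizing s with
  | one => simp at hs
  | mkM_mul t g ih =>
    by_cases hts : t = s
    · exact ⟨g, hts ▸ rfl⟩
    · rw [exp_monomialRep_mkM_mul] at hs
      obtain ⟨h, rfl⟩ := ih (s := op t s) (by simpa [Pi.single_apply, Ne.symm hts] using hs)
      exact ⟨mkM op (op s t) * h, by rw [← mul_assoc, mkM_mul_mkM op t s, mul_assoc]⟩

theorem eq_one_of_exp_eq_zero {g : StructureMonoid op} (hg : (ρ g).exp = 0) : g = 1 := by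
  induction g using induction_on with
  | one => rfl
  | mkM_mul s g _ =>
    rw [exp_monomialRep_mkM_mul] at hg
    simpa using congrFun hg s

theorem exp_monomialRep_injective : Function.Injective fun g => (ρ g).exp := by
  intro g h hgh
  induction g using induction_on generalizing h with
  | one => exact (eq_one_of_exp_eq_zero op hbij hcs (hgh.symm.trans (by simp))).symm
  | mkM_mul s g ih =>
    have hs : (ρ h).exp s ≠ 0 := by
      rw [← show (ρ (mkM op s * g)).exp = (ρ h).exp from hgh, exp_monomialRep_mkM_mul]
      simp
    obtain ⟨h, rfl⟩ := exists_eq_mkM_mul_of_exp_ne_zero op hbij hcs h hs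
    simp only [exp_monomialRep_mkM_mul, add_right_inj] at hgh
    rw [ih ((hbij s).2.injective_comp_right hgh)]

theorem exp_monomialRep_surjective [Fintype S] : Function.Surjective fun g => (ρ g).exp := by
  intro a
  induction hn : ∑ i, a i generalizing a with
  | zero => exact ⟨1, funext fun i => by simp_all [Finset.sum_eq_zero_iff]⟩
  | succ n ih =>
    obtain ⟨s, hs⟩ : ∃ s, a s ≠ 0 := by
      by_contra! h
      simp [h] at hn
    have hle : Pi.single s 1 ≤ a := by
      intro i
      by_cases his : i = s
      · subst his; simpa [Nat.one_le_iff_ne_zero] using hs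
      · simp [his]
    have hsum : ∑ i, a i = 1 + ∑ i, (a - Pi.single s 1 : S → ℕ) i := by
      conv_lhs => rw [← add_tsub_cancel_of_le hle]
      simp [Finset.sum_add_distrib]
    obtain ⟨g, hg⟩ := ih ((a - Pi.single s 1) ∘ (psi op hbij s).symm)
      (by simp only [Function.comp_apply, Equiv.sum_comp]; omega)
    refine ⟨mkM op s * g, ?_⟩
    simp only at hg ⊢
    rw [exp_monomialRep_mkM_mul, hg, Function.comp_assoc, show op s = psi op hbij s from rfl,
      Equiv.symm_comp_self, Function.comp_id, add_tsub_cancel_of_le hle]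

section Garside

variable {Δ : StructureMonoid op} (hΔ : (monomialRep op hbij hcs Δ).exp = 1)
include hΔ

theorem dvd_iff_exp_le_one [Fintype S] {g : StructureMonoid op} : g ∣ Δ ↔ (ρ g).exp ≤ 1 := by
  constructor
  · rintro ⟨h, rfl⟩
    rw [← hΔ, map_mul ρ]
    exact MonomialMat.exp_le_mul_exp _ _
  · intro hg
    obtain ⟨h, hh⟩ := exp_monomialRep_surjective op hbij hcs ((1 - (ρ g).exp) ∘ (ρ g).perm.symm)
    refine ⟨h, exp_monomialRep_injective op hbij hcs ?_⟩
    simp only at hh ⊢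
    rw [hΔ, map_mul, MonomialMat.mul_exp, hh, Function.comp_assoc, Equiv.symm_comp_self,
      Function.comp_id, add_tsub_cancel_of_le hg]

theorem exp_le_one_of_eq_mul {g h : StructureMonoid op} (hgh : Δ = h * g) : (ρ g).exp ≤ 1 := by
  have hle := MonomialMat.exp_comp_perm_le_mul_exp (ρ h) (ρ g)
  rw [← map_mul ρ, ← hgh, hΔ] at hle
  intro i
  simpa using hle ((ρ h).perm.symm i)

theorem exists_eq_mul_left_iff_exp_le_one [Fintype S] {g : StructureMonoid op} :
    (∃ h, Δ = h * g) ↔ (ρ g).exp ≤ 1 := by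
  refine ⟨fun ⟨h, hgh⟩ => exp_le_one_of_eq_mul op hbij hcs hΔ hgh, fun hg => ?_⟩
  obtain ⟨x, hx⟩ := exp_monomialRep_surjective op hbij hcs ((ρ g).exp ∘ (ρ Δ).perm)
  replace hx : (ρ x).exp = (ρ g).exp ∘ (ρ Δ).perm := hx
  obtain ⟨y, hxy⟩ := (dvd_iff_exp_le_one op hbij hcs hΔ).2 (by rw [hx]; exact fun i => hg _)
  obtain ⟨z, hyz⟩ := (dvd_iff_exp_le_one op hbij hcs hΔ).2 (exp_le_one_of_eq_mul op hbij hcs hΔ hxy)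
  -- `Δ = x y = y z` forces `e(z) ∘ σ_Δ = e(x)`, and `x` was chosen so that `e(x) = e(g) ∘ σ_Δ`.
  have hρ : ρ x * ρ y = ρ y * ρ z := by rw [← map_mul, ← map_mul, ← hxy, ← hyz]
  have hexp := MonomialMat.exp_comp_perm_eq_of_mul_eq_mul hρ (by rw [← map_mul, ← hxy, hΔ])
  rw [← map_mul, ← hxy, hx] at hexp
  have hzg : z = g :=
    exp_monomialRep_injective op hbij hcs ((ρ Δ).perm.surjective.injective_comp_right hexp)
  exact ⟨y, hzg ▸ hyz⟩

theorem ncard_setOf_dvd [Fintype S] : {g | g ∣ Δ}.ncard = 2 ^ Fintype.card S := by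
  have hset : {g | g ∣ Δ} = (fun g => (ρ g).exp) ⁻¹' Set.Iic 1 :=
    Set.ext fun g => dvd_iff_exp_le_one op hbij hcs hΔ
  rw [hset, Set.ncard_preimage_of_injective_subset_range (exp_monomialRep_injective op hbij hcs)
    (by simp [(exp_monomialRep_surjective op hbij hcs).range_eq]), ← Finset.coe_Iic,
    Set.ncard_coe_finset, Pi.card_Iic]
  simp

theorem closure_setOf_dvd : Submonoid.closure {g | g ∣ Δ} = ⊤ := by
  refine top_unique (closure_range_mkM op ▸ Submonoid.closure_mono ?_)
  rintro _ ⟨s, rfl⟩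
  exact exists_eq_mkM_mul_of_exp_ne_zero op hbij hcs Δ (by simp [hΔ])

end Garside

theorem toMatrix_comp_monomialRep [Fintype S] {Θ : StructureMonoid op →* Matrix S S ℚ[X]}
    (hΘ : ∀ s, Θ (mkM op s) = theta op hbij s) : MonomialMat.toMatrix.comp ρ = Θ :=
  hom_ext op fun s => by
    rw [hΘ, MonoidHom.comp_apply, monomialRep_mkM, theta, Dmat, Pmat_eq_permMatrix]
    simp [MonomialMat.toMatrix, monomialGen, Pi.single_apply, pow_ite]

theorem exp_monomialRep_eq_one [Fintype S] {Θ : StructureMonoid op →* Matrix S S ℚ[X]}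
    (hΘ : ∀ s, Θ (mkM op s) = theta op hbij s) {Δ : StructureMonoid op} {σ : Equiv.Perm S}
    (hΔ : Θ Δ = Matrix.diagonal (fun _ => X) * Pmat ℚ[X] σ) : (ρ Δ).exp = 1 := by
  have : ρ Δ = ⟨1, σ⟩ := MonomialMat.toMatrix_injective (R := ℚ) <| by
    rw [← MonoidHom.comp_apply, toMatrix_comp_monomialRep op hbij hcs hΘ, hΔ, Pmat_eq_permMatrix]
    simp [MonomialMat.toMatrix]
  rw [this]

end StructureMonoid

open StructureMonoid in
/-- The element `Δ` with diagonal part `diag(q,…,q)` is a Garside element of the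
structure monoid: it is balanced, its set of (left) divisors is finite of cardinality
`2^n`, and its divisors generate the monoid. -/
theorem Garside_element {S : Type*} [Fintype S] [DecidableEq S] (op : S → S → S)
    (hbij : ∀ s : S, Function.Bijective (op s))
    (hcs : ∀ s t u : S, op (op s t) (op s u) = op (op t s) (op t u))
    (Θ : StructureMonoid op →* Matrix S S (Polynomial ℚ))
    (hΘ : ∀ s : S, Θ (mkM op s) = theta op hbij s)
    (Δ : StructureMonoid op) (σΔ : Equiv.Perm S)
    (hΔ : Θ Δ = Matrix.diagonal (fun _ => (Polynomial.X : Polynomial ℚ)) *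
      Pmat (Polynomial ℚ) σΔ) :
    {g : StructureMonoid op | ∃ h, Δ = g * h} = {g : StructureMonoid op | ∃ h, Δ = h * g} ∧
    {g : StructureMonoid op | ∃ h, Δ = g * h}.Finite ∧
    {g : StructureMonoid op | ∃ h, Δ = g * h}.ncard = 2 ^ Fintype.card S ∧
    Submonoid.closure {g : StructureMonoid op | ∃ h, Δ = g * h} = ⊤ := by
  have hΔ₁ := exp_monomialRep_eq_one op hbij hcs hΘ hΔ
  have hcard := ncard_setOf_dvd op hbij hcs hΔ₁
  refine ⟨?_, Set.finite_of_ncard_ne_zero ?_, hcard, closure_setOf_dvd op hbij hcs hΔ₁⟩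
  · exact Set.ext fun g => (dvd_iff_exp_le_one op hbij hcs hΔ₁).trans
      (exists_eq_mul_left_iff_exp_le_one op hbij hcs hΔ₁).symm
  · exact hcard ▸ (pow_pos two_pos _).ne'
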